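/- arXiv:1311.0051 — 3 statements merged into one kernel-verified Lean document; each statement's English description precedes it below -/
import Mathlib

section
/- Let k be a perfect field of characteristic p > 0 and let A be a k-algebra whose Frobenius endomorphism is surjective. Then for every integer n ≥ 0, the canonical map W_{n+1}(k) ⊗_{W(k)} W(A) → W_{n+1}(A) is an isomorphism of W_{n+1}(k)-algebras, where W denotes p-typical Witt vectors and W_n Witt vectors of length n. -/
open TensorProduct
open Function

namespace Stmt5Aux

variable (p : ℕ) [Fact p.Prime]

theorem frob_iter_p (R : Type*) [CommRing R] (m : ℕ) :
    (⇑(WittVector.frobenius (p := p) (R := R)))^[m] (p : WittVector p R) = p := by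
  induction m with
  | zero => rfl
  | succ m ih => rw [Function.iterate_succ_apply', ih, map_natCast]

theorem vf_iter (R : Type*) [CommRing R] [CharP R p] (m : ℕ) (u : WittVector p R) :
    (⇑(WittVector.verschiebung (p := p) (R := R)))^[m] ((⇑(WittVector.frobenius))^[m] u) =
      u * (p : WittVector p R) ^ m := by
  induction m with
  | zero => simp
  | succ m ih =>
      rw [Function.iterate_succ_apply (f := ⇑(WittVector.verschiebung)),
        Function.iterate_succ_apply' (f := ⇑(WittVector.frobenius)),
        WittVector.verschiebung_frobenius]
      conv_lhs => rw [← frob_iter_p p R m]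
      rw [← WittVector.iterate_verschiebung_mul_left, ih, pow_succ, mul_assoc]

theorem trunc_p_pow (R : Type*) [CommRing R] [CharP R p] (m : ℕ) :
    WittVector.truncate (p := p) (R := R) (m + 1) ((p : WittVector p R) ^ (m + 1)) = 0 := by
  apply TruncatedWittVector.ext
  intro i
  rw [WittVector.coeff_truncate, TruncatedWittVector.coeff_zero]
  exact WittVector.coeff_p_pow_eq_zero p R (by omega)

theorem ker_trunc (A : Type*) [CommRing A] [CharP A p]
    (hA : Function.Surjective (frobenius A p)) (m : ℕ) (x : WittVector p A)
    (hx : WittVector.truncate (p := p) (m + 1) x = 0) :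
    ∃ u : WittVector p A, x = u * (p : WittVector p A) ^ (m + 1) := by
  have hx' : ∀ i < m + 1, x.coeff i = 0 :=
    (WittVector.mem_ker_truncate _ _).mp (RingHom.mem_ker.mpr hx)
  have hxe : x = (⇑(WittVector.verschiebung (p := p) (R := A)))^[m + 1] (x.shift (m + 1)) :=
    WittVector.eq_iterate_verschiebung hx'
  have hFs : Function.Surjective (⇑(WittVector.frobenius (p := p) (R := A))) := by
    rw [WittVector.frobenius_eq_map_frobenius]
    exact WittVector.map_surjective _ hA
  obtain ⟨u, hu⟩ := (hFs.iterate (m + 1)) (x.shift (m + 1))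
  exact ⟨u, by rw [hxe, ← hu, vf_iter]⟩

end Stmt5Aux

/-- Let `k` be a perfect field of characteristic `p > 0` and `A` a `k`-algebra
with surjective Frobenius.  Then for every `n ≥ 0` the canonical map
`W_{n+1}(k) ⊗_{W(k)} W(A) → W_{n+1}(A)` is an isomorphism of `W_{n+1}(k)`-algebras.
The `W(k)`-algebra structures on `W(A)` and on `W_{n+1}(k)` are the canonical ones
(functoriality of Witt vectors, resp. truncation), recorded here as hypotheses. -/
theorem stmt5 (p : ℕ) [Fact p.Prime] (k : Type*) [Field k] [CharP k p] [PerfectRing k p]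
    (A : Type*) [CommRing A] [Algebra k A] [CharP A p]
    (hA : Function.Surjective (frobenius A p)) (n : ℕ)
    [Algebra (WittVector p k) (WittVector p A)]
    (halg₁ : (algebraMap (WittVector p k) (WittVector p A) : WittVector p k →+* WittVector p A) =
      WittVector.map (algebraMap k A))
    [Algebra (WittVector p k) (TruncatedWittVector p (n + 1) k)]
    (halg₂ : (algebraMap (WittVector p k) (TruncatedWittVector p (n + 1) k) :
        WittVector p k →+* TruncatedWittVector p (n + 1) k) = WittVector.truncate (n + 1)) :
    ∃ e : (TruncatedWittVector p (n + 1) k) ⊗[WittVector p k] (WittVector p A) ≃+*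
        TruncatedWittVector p (n + 1) A,
      ∀ (y : WittVector p k) (w : WittVector p A),
        e ((WittVector.truncate (n + 1) y) ⊗ₜ[WittVector p k] w) =
          WittVector.truncate (n + 1) (WittVector.map (algebraMap k A) y * w) := by
  classical
  letI : Algebra (WittVector p k) (TruncatedWittVector p (n + 1) A) :=
    ((WittVector.truncate (n + 1)).comp (WittVector.map (algebraMap k A))).toAlgebra
  -- the map f₁ : W_{n+1}(k) → W_{n+1}(A)
  have hker₁ : RingHom.ker (WittVector.truncate (p := p) (R := k) (n + 1)) ≤
      RingHom.ker ((WittVector.truncate (n + 1)).comp (WittVector.map (algebraMap k A))) := by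
    intro y hy
    have hy' := (WittVector.mem_ker_truncate _ _).mp hy
    rw [RingHom.mem_ker, RingHom.comp_apply]
    refine RingHom.mem_ker.mp ((WittVector.mem_ker_truncate _ _).mpr fun i hi => ?_)
    rw [WittVector.map_coeff, hy' i hi, map_zero]
  set f₁ : TruncatedWittVector p (n + 1) k →+* TruncatedWittVector p (n + 1) A :=
    (WittVector.truncate (n + 1)).liftOfRightInverse
      (Function.surjInv (WittVector.truncate_surjective p (n + 1) k))
      (Function.rightInverse_surjInv _)
      ⟨(WittVector.truncate (n + 1)).comp (WittVector.map (algebraMap k A)), hker₁⟩ with hf₁def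
  have hf₁ : ∀ y : WittVector p k, f₁ (WittVector.truncate (n + 1) y) =
      WittVector.truncate (n + 1) (WittVector.map (algebraMap k A) y) := fun y =>
    RingHom.liftOfRightInverse_comp_apply _ _ _ _ y
  -- f₁, f₂ as algebra homs
  have halgT : ∀ y : WittVector p k,
      algebraMap (WittVector p k) (TruncatedWittVector p (n + 1) A) y =
        WittVector.truncate (n + 1) (WittVector.map (algebraMap k A) y) := fun _ => rfl
  set f₁' : TruncatedWittVector p (n + 1) k →ₐ[WittVector p k] TruncatedWittVector p (n + 1) A :=
    { toRingHom := f₁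
      commutes' := fun y => by
        show f₁ _ = _
        rw [RingHom.congr_fun halg₂ y, hf₁ y, halgT] } with hf₁'def
  set f₂' : WittVector p A →ₐ[WittVector p k] TruncatedWittVector p (n + 1) A :=
    { toRingHom := WittVector.truncate (n + 1)
      commutes' := fun y => by
        show WittVector.truncate (n + 1) _ = _
        rw [halgT]
        exact congrArg _ (RingHom.congr_fun halg₁ y) } with hf₂'def
  set f := (Algebra.TensorProduct.productMap f₁' f₂').toRingHom with hfdef
  have hf : ∀ (x : TruncatedWittVector p (n + 1) k) (w : WittVector p A),
      f (x ⊗ₜ[WittVector p k] w) = f₁ x * WittVector.truncate (n + 1) w := fun x w => rfl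
  -- the inverse map g
  set g₀ := (Algebra.TensorProduct.includeRight :
      WittVector p A →ₐ[WittVector p k]
        (TruncatedWittVector p (n + 1) k) ⊗[WittVector p k] (WittVector p A)).toRingHom with hg₀def
  have hker₂ : RingHom.ker (WittVector.truncate (p := p) (R := A) (n + 1)) ≤ RingHom.ker g₀ := by
    intro w hw
    obtain ⟨u, rfl⟩ := Stmt5Aux.ker_trunc p A hA n w (RingHom.mem_ker.mp hw)
    rw [RingHom.mem_ker]
    have h1 : u * (p : WittVector p A) ^ (n + 1) = ((p : WittVector p k) ^ (n + 1)) • u := by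
      rw [Algebra.smul_def, RingHom.congr_fun halg₁ _, map_pow, map_natCast, mul_comm]
    show (1 : TruncatedWittVector p (n + 1) k) ⊗ₜ[WittVector p k]
        (u * (p : WittVector p A) ^ (n + 1)) = 0
    rw [h1, ← TensorProduct.smul_tmul, Algebra.smul_def, mul_one,
      RingHom.congr_fun halg₂ _, Stmt5Aux.trunc_p_pow, TensorProduct.zero_tmul]
  set g := (WittVector.truncate (p := p) (R := A) (n + 1)).liftOfRightInverse
      (Function.surjInv (WittVector.truncate_surjective p (n + 1) A))
      (Function.rightInverse_surjInv _) ⟨g₀, hker₂⟩ with hgdef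
  have hg : ∀ w : WittVector p A, g (WittVector.truncate (n + 1) w) =
      (1 : TruncatedWittVector p (n + 1) k) ⊗ₜ[WittVector p k] w := fun w =>
    RingHom.liftOfRightInverse_comp_apply _ _ _ _ w
  -- hom-inv identities
  have hgf : ∀ z, g (f z) = z := by
    intro z
    induction z using TensorProduct.induction_on with
    | zero => simp
    | tmul x w =>
        obtain ⟨y, rfl⟩ := WittVector.truncate_surjective p (n + 1) k x
        rw [hf, hf₁, ← map_mul, hg, ← RingHom.congr_fun halg₁ y, ← Algebra.smul_def,
          TensorProduct.tmul_smul, TensorProduct.smul_tmul', Algebra.smul_def, mul_one,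
          RingHom.congr_fun halg₂ y]
    | add a b ha hb => rw [map_add, map_add, ha, hb]
  have hfg : ∀ t, f (g t) = t := by
    intro t
    obtain ⟨w, rfl⟩ := WittVector.truncate_surjective p (n + 1) A t
    rw [hg, hf, map_one, one_mul]
  refine ⟨RingEquiv.ofRingHom f g (RingHom.ext hfg) (RingHom.ext hgf), fun y w => ?_⟩
  show f (WittVector.truncate (n + 1) y ⊗ₜ[WittVector p k] w) = _
  rw [hf, hf₁, ← map_mul]
end

section
/- Let f : X → Y be a morphism of one-point schemes (schemes whose underlying topological space has exactly one point) which admits a section. Then f is a universal homeomorphism. -/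
open AlgebraicGeometry CategoryTheory CategoryTheory.Limits

universe u

section Aux

variable {X Y : Scheme.{u}} (f : X ⟶ Y)

lemma aux_resMap_iso [Subsingleton X] (s : Y ⟶ X) (hsf : s ≫ f = 𝟙 Y) (x : X) :
    IsIso (f.residueFieldMap x) := by
  have hx : x = s.base (f.base x) := Subsingleton.elim _ _
  rw [hx]
  generalize f.base x = y
  have hcomp : (s ≫ f).residueFieldMap y =
      f.residueFieldMap (s.base y) ≫ s.residueFieldMap y :=
    Scheme.residueFieldMap_comp s f y
  have h1 : (s ≫ f).residueFieldMap y =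
      (Y.residueFieldCongr (by rw [hsf])).hom ≫ Scheme.Hom.residueFieldMap (𝟙 Y) y :=
    Scheme.Hom.residueFieldMap_congr hsf y
  haveI : IsIso (Scheme.Hom.residueFieldMap (𝟙 Y) y) := by
    rw [Scheme.residueFieldMap_id]; exact ⟨⟨𝟙 _, by simp, by simp⟩⟩
  haveI : IsIso ((s ≫ f).residueFieldMap y) := by rw [h1]; infer_instance
  -- the composite is bijective
  have hbij : Function.Bijective ((s ≫ f).residueFieldMap y) :=
    ConcreteCategory.bijective_of_isIso _
  rw [hcomp] at hbij
  have hssurj : Function.Surjective (s.residueFieldMap y) :=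
    Function.Surjective.of_comp (g := f.residueFieldMap (s.base y)) (by exact hbij.2)
  have hsinj : Function.Injective (s.residueFieldMap y) :=
    RingHom.injective _
  haveI : IsIso (s.residueFieldMap y) :=
    (RingEquiv.ofBijective (s.residueFieldMap y).hom ⟨hsinj, hssurj⟩).toCommRingCatIso.isIso_hom
  have : f.residueFieldMap (s.base y) =
      Scheme.Hom.residueFieldMap (s ≫ f) y ≫ CategoryTheory.inv (s.residueFieldMap y) := by
    exact (CategoryTheory.IsIso.eq_comp_inv _).mpr hcomp.symm
  rw [this]
  exact IsIso.comp_isIso' ‹IsIso ((s ≫ f).residueFieldMap y)› inferInstance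

lemma aux_pb_subsingleton [Subsingleton X] [Subsingleton Y]
    (s : Y ⟶ X) (hsf : s ≫ f = 𝟙 Y) :
    Subsingleton ↥(pullback f f) := by
  have hfib : ∀ T : Scheme.Pullback.Triplet f f, Subsingleton ↥(Spec T.tensor) := by
    intro T
    haveI : IsIso ((Y.residueFieldCongr T.hx).inv ≫ f.residueFieldMap T.x) := by
      haveI := aux_resMap_iso f s hsf T.x
      infer_instance
    haveI : IsIso (T.tensorInr) :=
      inferInstanceAs (IsIso (pushout.inr _ _))
    let e : Spec T.tensor ≅ Spec (X.residueField T.y) :=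
      Scheme.Spec.mapIso (asIso T.tensorInr).op
    haveI : Subsingleton ↥(Spec (X.residueField T.y)) :=
      inferInstanceAs (Subsingleton (PrimeSpectrum _))
    exact (Scheme.homeoOfIso e).toEquiv.subsingleton
  haveI hT : Subsingleton (Scheme.Pullback.Triplet f f) :=
    ⟨fun T1 T2 => Scheme.Pullback.Triplet.ext (Subsingleton.elim _ _) (Subsingleton.elim _ _)⟩
  haveI : Subsingleton (Σ T : Scheme.Pullback.Triplet f f, ↥(Spec T.tensor)) := by
    constructor
    rintro ⟨T1, p1⟩ ⟨T2, p2⟩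
    obtain rfl : T1 = T2 := Subsingleton.elim _ _
    haveI := hfib T1
    rw [Subsingleton.elim p1 p2]
  exact Scheme.Pullback.carrierEquiv.subsingleton

lemma aux_univInj [Nonempty X] [Subsingleton X] [Subsingleton Y]
    (s : Y ⟶ X) (hsf : s ≫ f = 𝟙 Y) : UniversallyInjective f := by
  rw [UniversallyInjective.iff_diagonal]
  haveI := aux_pb_subsingleton f s hsf
  exact ⟨fun t => ⟨Classical.arbitrary X, Subsingleton.elim _ _⟩⟩

end Aux

/-- A morphism of schemes is a universal homeomorphism if every base change of it is a
homeomorphism on underlying topological spaces. -/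
def IsUniversalHomeomorphism : MorphismProperty Scheme.{u} :=
  (AlgebraicGeometry.topologically (fun f => IsHomeomorph f)).universally

/-- A morphism `f : X ⟶ Y` of one-point schemes which admits a section is a
universal homeomorphism. -/
theorem stmt9 (X Y : Scheme.{u}) (f : X ⟶ Y)
    (hX : Nonempty X ∧ Subsingleton X) (hY : Nonempty Y ∧ Subsingleton Y)
    (hs : ∃ s : Y ⟶ X, s ≫ f = 𝟙 Y) :
    IsUniversalHomeomorphism f := by
  obtain ⟨s, hsf⟩ := hs
  haveI := hX.1; haveI := hX.2; haveI := hY.2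
  haveI huinj : UniversallyInjective f := aux_univInj f s hsf
  intro X' Y' i₁ i₂ f' hPB
  haveI : UniversallyInjective f' :=
    MorphismProperty.of_isPullback hPB.flip huinj
  have hinj : Function.Injective f'.base := f'.injective
  let σ : Y' ⟶ X' := hPB.lift (𝟙 Y') (i₂ ≫ s)
    (by rw [Category.id_comp, Category.assoc, hsf, Category.comp_id])
  have hσ : σ ≫ f' = 𝟙 Y' := hPB.lift_fst _ _ _
  have ri : ∀ y, f'.base (σ.base y) = y := fun y => by
    rw [← Scheme.Hom.comp_apply, hσ]; rfl
  have li : ∀ x, σ.base (f'.base x) = x := fun x => hinj (ri _)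
  show IsHomeomorph f'.base
  exact (Homeomorph.mk ⟨f'.base, σ.base, li, ri⟩
    f'.base.hom.continuous σ.base.hom.continuous).isHomeomorph
end

section
/- Let k be a field of characteristic p > 2, let R_2 = k[t]/(t^3), and consider A = k[x_0,x_1] and B = k[x_0,x_1,y_0,y_1]/(y_0^2, x_0 - 2 y_0 y_1) with the k-algebra map A → B induced by inclusion of variables. Then B is not flat as an A-module; in particular, the element x_0, which is a regular element of A, is a zero divisor in B. -/
open MvPolynomial

set_option maxHeartbeats 1000000
set_option synthInstance.maxHeartbeats 400000

noncomputable section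

/-- `A = k[x₀, x₁]`. -/
abbrev A18 (k : Type*) [Field k] := MvPolynomial (Fin 2) k

/-- The ideal `(y₀², x₀ - 2 y₀ y₁)` of `k[x₀, x₁, y₀, y₁]` (variables `0,1,2,3` standing for
`x₀, x₁, y₀, y₁`). -/
def I18 (k : Type*) [Field k] : Ideal (MvPolynomial (Fin 4) k) :=
  Ideal.span {X 2 ^ 2, X 0 - 2 * (X 2 * X 3)}

/-- `B = k[x₀, x₁, y₀, y₁]/(y₀², x₀ - 2 y₀ y₁)`. -/
abbrev B18 (k : Type*) [Field k] := MvPolynomial (Fin 4) k ⧸ I18 k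

/-- The structural map `A → B` induced by the inclusion of variables. -/
def f18 (k : Type*) [Field k] : A18 k →+* B18 k :=
  (Ideal.Quotient.mk (I18 k)).comp (rename (Fin.castLE (by omega))).toRingHom

noncomputable instance (k : Type*) [Field k] : Algebra (A18 k) (B18 k) := (f18 k).toAlgebra

/-- Flatness implies regular elements act injectively. -/
theorem flat_smul_inj {R M : Type*} [CommRing R] [AddCommGroup M] [Module R M]
    [Module.Flat R M] {x : R} (hx : x ∈ nonZeroDivisors R) :
    Function.Injective fun m : M => x • m := by
  have h1 : Function.Injective (LinearMap.lsmul R R x) := by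
    intro a b h
    have hx' : x * a = x * b := h
    have h2 : (a - b) * x = 0 := by linear_combination hx'
    exact sub_eq_zero.mp (hx.2 _ h2)
  have h2 := Module.Flat.rTensor_preserves_injective_linearMap (M := M)
    (LinearMap.lsmul R R x) h1
  have key : ∀ m : M, (LinearMap.lsmul R R x).rTensor M ((TensorProduct.lid R M).symm m)
      = (TensorProduct.lid R M).symm (x • m) := by
    intro m
    rw [TensorProduct.lid_symm_apply, TensorProduct.lid_symm_apply,
      LinearMap.rTensor_tmul, ← TensorProduct.smul_tmul]
    simp
  intro m m' hmm
  have h3 : (TensorProduct.lid R M).symm m = (TensorProduct.lid R M).symm m' := by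
    apply h2
    rw [key, key]
    exact congrArg _ hmm
  exact (TensorProduct.lid R M).symm.injective h3

theorem y0_ne_zero (k : Type*) [Field k] :
    (Ideal.Quotient.mk (I18 k)) (X 2) ≠ 0 := by
  intro h
  have hmem : (X 2 : MvPolynomial (Fin 4) k) ∈ I18 k :=
    (Ideal.Quotient.eq_zero_iff_mem).mp h
  set g : MvPolynomial (Fin 4) k →ₐ[k] DualNumber k :=
    aeval (fun i : Fin 4 => if i = 2 then (DualNumber.eps : DualNumber k) else 0) with hg
  have hker : I18 k ≤ RingHom.ker g.toRingHom := by
    rw [I18, Ideal.span_le]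
    rintro q (rfl | rfl) <;>
      simp [RingHom.mem_ker, hg, sq, DualNumber.eps_mul_eps]
  have h0 : g (X 2) = 0 := hker hmem
  have h1 : (DualNumber.eps : DualNumber k) = 0 := by simpa [hg] using h0
  have h2 := congrArg TrivSqZeroExt.snd h1
  rw [DualNumber.snd_eps, TrivSqZeroExt.snd_zero] at h2
  exact one_ne_zero h2

/-- Over a field `k` of characteristic `p > 2`, with `A = k[x₀,x₁]` and
`B = k[x₀,x₁,y₀,y₁]/(y₀², x₀ - 2y₀y₁)`, the ring `B` is not flat as an `A`-module; in
particular `x₀` is a regular element of `A` whose image in `B` is a zero divisor. -/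
theorem stmt18 (k : Type*) [Field k] (p : ℕ) (hp : p.Prime) (hp2 : 2 < p) [CharP k p] :
    ¬ Module.Flat (A18 k) (B18 k) ∧
    (X 0 : A18 k) ∈ nonZeroDivisors (A18 k) ∧
    f18 k (X 0) ∉ nonZeroDivisors (B18 k) := by
  have hreg : (X 0 : A18 k) ∈ nonZeroDivisors (A18 k) :=
    mem_nonZeroDivisors_of_ne_zero (X_ne_zero 0)
  set y : B18 k := Ideal.Quotient.mk (I18 k) (X 2) with hy
  have hyne : y ≠ 0 := y0_ne_zero k
  have hf : f18 k (X 0) = Ideal.Quotient.mk (I18 k) (X 0) := by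
    show Ideal.Quotient.mk (I18 k) (rename (Fin.castLE (by omega)) (X 0)) = _
    rw [rename_X]
    congr 1
  have hprod : f18 k (X 0) * y = 0 := by
    rw [hf, hy, ← map_mul, Ideal.Quotient.eq_zero_iff_mem]
    have hrw : (X 0 : MvPolynomial (Fin 4) k) * X 2
        = (X 0 - 2 * (X 2 * X 3)) * X 2 + X 2 ^ 2 * (2 * X 3) := by ring
    rw [hrw]
    exact Ideal.add_mem _
      (Ideal.mul_mem_right _ _ (Ideal.subset_span (by simp)))
      (Ideal.mul_mem_right _ _ (Ideal.subset_span (by simp)))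
  refine ⟨?_, hreg, ?_⟩
  · intro hflat
    apply hyne
    have hinj := flat_smul_inj (M := B18 k) hreg
    have h0 : (X 0 : A18 k) • y = (X 0 : A18 k) • (0 : B18 k) := by
      rw [Algebra.smul_def, Algebra.smul_def, mul_zero,
        RingHom.algebraMap_toAlgebra, hprod]
    exact hinj h0
  · intro hmem
    exact hyne (hmem.2 y (by rw [mul_comm] at hprod; exact hprod))

end
end
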